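/- If f : X → Y is a quasi-isometry between geodesic metric spaces, then X is Gromov hyperbolic if and only if Y is Gromov hyperbolic. -/

import Mathlib

/-! A `δ`-centre in every geodesic triangle forces `6δ`-slim triangles. With `K`-slim triangles,
a geodesic joining the ends of a chain of `n` short steps stays within `K log₂ n` of it (bisect
the chain; slimness costs `K` per level). If a point `w₀` of a geodesic is at maximal distance
`D` from a quasi-geodesic chain, the detour of the chain around `w₀` has length linear in `D`,
and the previous bound makes `D` logarithmic in that length; so `D` is bounded (Morse lemma).
The sides of a geodesic triangle in `Y` are discretised and pulled back along `f` to
quasi-geodesic chains in `X`; by the Morse lemma, `f` maps a `δ`-centre of a geodesic triangle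
on their ends to a centre, up to a uniform error, of the given triangle. A quasi-inverse of `f`
gives the converse. -/

open Metric Set

/-- `s` is a geodesic segment from `x` to `y`: the image of an isometric
parametrization of `[0, dist x y]` sending the endpoints to `x` and `y`. -/
def IsGeodesicSegment {X : Type*} [MetricSpace X] (s : Set X) (x y : X) : Prop :=
  ∃ γ : ℝ → X, γ 0 = x ∧ γ (dist x y) = y ∧ s = γ '' Set.Icc 0 (dist x y) ∧
    ∀ a ∈ Set.Icc (0:ℝ) (dist x y), ∀ b ∈ Set.Icc (0:ℝ) (dist x y),
      dist (γ a) (γ b) = |a - b|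

/-- A geodesic metric space: any two points are joined by a geodesic segment. -/
def GeodesicSpace (X : Type*) [MetricSpace X] : Prop :=
  ∀ x y : X, ∃ s : Set X, IsGeodesicSegment s x y

/-- `s1, s2, s3` are the sides of a geodesic triangle with vertices `a, b, c`. -/
def IsGeodesicTriangle {X : Type*} [MetricSpace X] (a b c : X) (s1 s2 s3 : Set X) : Prop :=
  IsGeodesicSegment s1 a b ∧ IsGeodesicSegment s2 b c ∧ IsGeodesicSegment s3 c a

/-- `X` is `δ`-hyperbolic: every geodesic triangle has a `δ`-center, i.e. a point
within distance `δ` of each of the three sides. -/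
def DeltaHyperbolic (X : Type*) [MetricSpace X] (δ : ℝ) : Prop :=
  ∀ (a b c : X) (s1 s2 s3 : Set X), IsGeodesicTriangle a b c s1 s2 s3 →
    ∃ p : X, Metric.infDist p s1 ≤ δ ∧ Metric.infDist p s2 ≤ δ ∧ Metric.infDist p s3 ≤ δ

/-- `X` is Gromov hyperbolic if it is `δ`-hyperbolic for some `δ ≥ 0`. -/
def GromovHyperbolic (X : Type*) [MetricSpace X] : Prop :=
  ∃ δ : ℝ, 0 ≤ δ ∧ DeltaHyperbolic X δ

/-- `f` is a `(l, C)`-quasi-isometric embedding. -/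
def QIEmbedding {X Y : Type*} [MetricSpace X] [MetricSpace Y]
    (f : X → Y) (l C : ℝ) : Prop :=
  ∀ x x' : X, (1 / l) * dist x x' - C ≤ dist (f x) (f x') ∧
    dist (f x) (f x') ≤ l * dist x x' + C

lemma Nat.clog_two_half_add_one_le {n : ℕ} (hn : 2 ≤ n) :
    Nat.clog 2 (n / 2) + 1 ≤ Nat.clog 2 n ∧ Nat.clog 2 (n - n / 2) + 1 ≤ Nat.clog 2 n := by
  have hsplit : Nat.clog 2 n = Nat.clog 2 (n - n / 2) + 1 := by
    rw [Nat.clog_of_two_le one_lt_two hn]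
    congr 2
    omega
  exact ⟨by rw [hsplit]; gcongr; omega, hsplit.ge⟩

open Filter Topology in
lemma exists_le_of_le_mul_clog_add {a b : ℝ} (ha : 0 ≤ a) :
    ∃ N : ℕ, ∀ m : ℕ, (m : ℝ) ≤ a * Nat.clog 2 m + b → m ≤ N := by
  have hlim : Tendsto (fun c : ℕ => 2 * a * ((c : ℝ) ^ 1 / 2 ^ c) + 2 * b * ((c : ℝ) ^ 0 / 2 ^ c))
      atTop (𝓝 0) := by
    simpa using ((tendsto_pow_const_div_const_pow_of_one_lt 1 one_lt_two).const_mul (2 * a)).add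
      ((tendsto_pow_const_div_const_pow_of_one_lt 0 one_lt_two).const_mul (2 * b))
  obtain ⟨c₀, hc₀⟩ := eventually_atTop.1 (hlim.eventually (gt_mem_nhds one_pos))
  refine ⟨max 1 ⌈a * c₀ + b⌉₊, fun m hm => ?_⟩
  rcases le_or_gt m 1 with h1 | h1
  · exact le_max_of_le_left h1
  have hpow : (2 : ℝ) ^ Nat.clog 2 m < 2 * m := by
    have hpred := Nat.pow_pred_clog_lt_self one_lt_two h1
    have hsucc := Nat.succ_pred_eq_of_pos (Nat.clog_pos one_lt_two h1)
    rw [← hsucc, pow_succ]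
    exact_mod_cast (by omega : 2 ^ (Nat.clog 2 m).pred * 2 < 2 * m)
  have hc : Nat.clog 2 m < c₀ := by
    by_contra! hc
    have h := hc₀ _ hc
    rw [pow_one, pow_zero, ← mul_div_assoc, ← mul_div_assoc, ← add_div,
      div_lt_one (by positivity)] at h
    linarith
  have hm' : (m : ℝ) ≤ a * c₀ + b := by
    have : a * Nat.clog 2 m ≤ a * c₀ := by gcongr
    linarith
  exact le_max_of_le_right (Nat.cast_le.1 (hm'.trans (Nat.le_ceil _)))

lemma exists_le_dist_eq_infDist_image_Iic {X : Type*} [MetricSpace X] (z : ℕ → X) (n : ℕ)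
    (w : X) : ∃ k ≤ n, dist w (z k) = infDist w (z '' Iic n) := by
  obtain ⟨_, ⟨k, hk, rfl⟩, hwk⟩ := ((finite_Iic n).image z).isCompact.exists_infDist_eq_dist
    ⟨z 0, 0, n.zero_le, rfl⟩ w
  exact ⟨k, hk, hwk.symm⟩

lemma isGeodesicSegment_image_Icc {X : Type*} [MetricSpace X] {γ : ℝ → X} {T a b : ℝ}
    (hiso : ∀ u ∈ Icc (0 : ℝ) T, ∀ v ∈ Icc (0 : ℝ) T, dist (γ u) (γ v) = |u - v|)
    (ha : 0 ≤ a) (hab : a ≤ b) (hb : b ≤ T) : IsGeodesicSegment (γ '' Icc a b) (γ a) (γ b) := by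
  have hiso' : ∀ u ∈ Icc a b, ∀ v ∈ Icc a b, dist (γ u) (γ v) = |u - v| :=
    fun u hu v hv => hiso u ⟨ha.trans hu.1, hu.2.trans hb⟩ v ⟨ha.trans hv.1, hv.2.trans hb⟩
  have hd : dist (γ a) (γ b) = b - a := by
    rw [hiso' a ⟨le_rfl, hab⟩ b ⟨hab, le_rfl⟩, abs_of_nonpos (by linarith), neg_sub]
  refine ⟨fun u => γ (a + u), by simp, by rw [hd]; ring_nf, ?_, ?_⟩
  · rw [hd, ← image_image γ (a + ·), image_const_add_Icc]
    ring_nf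
  · rw [hd]
    intro u hu v hv
    rw [hiso' _ ⟨by linarith [hu.1], by linarith [hu.2]⟩ _ ⟨by linarith [hv.1], by linarith [hv.2]⟩]
    ring_nf

namespace IsGeodesicSegment

variable {X : Type*} [MetricSpace X] {s : Set X} {x y : X}

lemma mem_left (h : IsGeodesicSegment s x y) : x ∈ s := by
  obtain ⟨γ, h0, -, rfl, -⟩ := h
  exact ⟨0, ⟨le_rfl, dist_nonneg⟩, h0⟩

lemma mem_right (h : IsGeodesicSegment s x y) : y ∈ s := by
  obtain ⟨γ, -, hT, rfl, -⟩ := h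
  exact ⟨dist x y, ⟨dist_nonneg, le_rfl⟩, hT⟩

lemma nonempty (h : IsGeodesicSegment s x y) : s.Nonempty :=
  ⟨x, h.mem_left⟩

lemma isCompact (h : IsGeodesicSegment s x y) : IsCompact s := by
  obtain ⟨γ, -, -, rfl, hiso⟩ := h
  refine isCompact_Icc.image_of_continuousOn (LipschitzOnWith.continuousOn (K := 1) ?_)
  intro u hu v hv
  rw [edist_dist, hiso u hu v hv, ENNReal.coe_one, one_mul, edist_dist, Real.dist_eq]

lemma symm (h : IsGeodesicSegment s x y) : IsGeodesicSegment s y x := by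
  obtain ⟨γ, h0, hT, rfl, hiso⟩ := h
  set T := dist x y
  have hT' : dist y x = T := dist_comm y x
  have hreflect : (fun u => T - u) '' Icc 0 T = Icc 0 T := by
    ext v
    simp only [mem_image, mem_Icc]
    constructor
    · rintro ⟨u, ⟨h1, h2⟩, rfl⟩
      constructor <;> linarith
    · rintro ⟨h1, h2⟩
      exact ⟨T - v, ⟨by linarith, by linarith⟩, by ring⟩
  refine ⟨fun u => γ (T - u), by simp [hT], by simp [hT', h0], ?_, ?_⟩
  · rw [hT']
    nth_rewrite 1 [← hreflect]
    exact image_image _ _ _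
  · rw [hT']
    intro a ha b hb
    rw [hiso _ ⟨by linarith [ha.2], by linarith [ha.1]⟩ _ ⟨by linarith [hb.2], by linarith [hb.1]⟩,
      abs_sub_comm]
    ring_nf

lemma exists_dist_le_of_infDist_le (h : IsGeodesicSegment s x y) {w : X} {r : ℝ}
    (hw : infDist w s ≤ r) : ∃ w' ∈ s, dist w w' ≤ r := by
  obtain ⟨w', hw's, hw'⟩ := h.isCompact.exists_infDist_eq_dist h.nonempty w
  exact ⟨w', hw's, hw' ▸ hw⟩

lemma dist_add_dist_of_mem_of_mem (h : IsGeodesicSegment s x y) {p q : X} (hp : p ∈ s)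
    (hq : q ∈ s) (hpq : dist x p ≤ dist x q) : dist x p + dist p q = dist x q := by
  obtain ⟨γ, rfl, -, rfl, hiso⟩ := h
  obtain ⟨u, hu, rfl⟩ := hp
  obtain ⟨v, hv, rfl⟩ := hq
  have h0mem : (0 : ℝ) ∈ Icc 0 (dist (γ 0) y) := ⟨le_rfl, dist_nonneg⟩
  rw [hiso 0 h0mem u hu, hiso 0 h0mem v hv, zero_sub, zero_sub, abs_neg, abs_neg,
    abs_of_nonneg hu.1, abs_of_nonneg hv.1] at hpq ⊢
  rw [hiso u hu v hv, abs_of_nonpos (by linarith)]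
  ring

lemma dist_add_dist (h : IsGeodesicSegment s x y) {q : X} (hq : q ∈ s) :
    dist x q + dist q y = dist x y := by
  obtain ⟨γ, h0, hT, rfl, hiso⟩ := h
  obtain ⟨u, hu, rfl⟩ := hq
  have h0mem : (0 : ℝ) ∈ Icc 0 (dist x y) := ⟨le_rfl, dist_nonneg⟩
  have hTmem : dist x y ∈ Icc 0 (dist x y) := ⟨dist_nonneg, le_rfl⟩
  conv_lhs => rw [← h0, ← hT, hiso 0 h0mem u hu, hiso u hu _ hTmem]
  rw [abs_of_nonpos (by linarith [hu.1]), abs_of_nonpos (by linarith [hu.2])]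
  ring

lemma min_dist_le_half (h : IsGeodesicSegment s x y) {w : X} (hw : w ∈ s) :
    min (dist w x) (dist w y) ≤ dist x y / 2 := by
  have := h.dist_add_dist hw
  rw [dist_comm w x]
  linarith [min_le_left (dist x w) (dist w y), min_le_right (dist x w) (dist w y)]

lemma exists_subsegment (h : IsGeodesicSegment s x y) {w : X} (hw : w ∈ s) {r : ℝ}
    (hr : 0 ≤ r) : ∃ s' ⊆ s, ∃ u v, IsGeodesicSegment s' u v ∧ w ∈ s' ∧ dist u v ≤ 2 * r ∧
      (u = x ∨ dist w u = r) ∧ (v = y ∨ dist w v = r) := by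
  obtain ⟨γ, h0, hT, rfl, hiso⟩ := h
  obtain ⟨τ, hτ, rfl⟩ := hw
  set T := dist x y
  set α := max 0 (τ - r)
  set β := min T (τ + r)
  have hατ : α ≤ τ := max_le hτ.1 (by linarith)
  have hτβ : τ ≤ β := le_min hτ.2 (by linarith)
  have hα : α ∈ Icc 0 T := ⟨le_max_left _ _, hατ.trans hτ.2⟩
  have hβ : β ∈ Icc 0 T := ⟨hτ.1.trans hτβ, min_le_left _ _⟩
  refine ⟨γ '' Icc α β, image_mono (Icc_subset_Icc hα.1 hβ.2), γ α, γ β,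
    isGeodesicSegment_image_Icc hiso hα.1 (hατ.trans hτβ) hβ.2, ⟨τ, ⟨hατ, hτβ⟩, rfl⟩, ?_, ?_, ?_⟩
  · rw [hiso α hα β hβ, abs_sub_comm, abs_of_nonneg (by linarith)]
    linarith [le_max_right 0 (τ - r), min_le_right T (τ + r)]
  · rcases le_total (τ - r) 0 with hτr | hτr
    · exact Or.inl (by rw [show α = 0 from max_eq_left hτr, h0])
    · exact Or.inr (by rw [hiso τ hτ α hα, show α = τ - r from max_eq_right hτr]; simp [hr])
  · rcases le_total T (τ + r) with hτr | hτr
    · exact Or.inl (by rw [show β = T from min_eq_left hτr, hT])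
    · exact Or.inr (by rw [hiso τ hτ β hβ, show β = τ + r from min_eq_right hτr]; simp [hr])

end IsGeodesicSegment

def SlimTriangles (X : Type*) [MetricSpace X] (K : ℝ) : Prop :=
  ∀ (a b c : X) (s1 s2 s3 : Set X), IsGeodesicTriangle a b c s1 s2 s3 →
    ∀ x ∈ s1, min (infDist x s2) (infDist x s3) ≤ K

namespace DeltaHyperbolic

variable {X : Type*} [MetricSpace X] {δ : ℝ}

lemma exists_close_points (hδ : DeltaHyperbolic X δ) {a b c : X} {s1 s2 s3 : Set X}
    (h : IsGeodesicTriangle a b c s1 s2 s3) :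
    ∃ q1 ∈ s1, ∃ q2 ∈ s2, ∃ q3 ∈ s3, dist q1 q2 ≤ 2 * δ ∧ dist q1 q3 ≤ 2 * δ := by
  obtain ⟨p, hp1, hp2, hp3⟩ := hδ a b c s1 s2 s3 h
  obtain ⟨q1, hq1, h1⟩ := h.1.exists_dist_le_of_infDist_le hp1
  obtain ⟨q2, hq2, h2⟩ := h.2.1.exists_dist_le_of_infDist_le hp2
  obtain ⟨q3, hq3, h3⟩ := h.2.2.exists_dist_le_of_infDist_le hp3
  refine ⟨q1, hq1, q2, hq2, q3, hq3, ?_, ?_⟩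
  · linarith [dist_triangle_left q1 q2 p]
  · linarith [dist_triangle_left q1 q3 p]

lemma infDist_le_of_dist_add_dist_le (hX : GeodesicSpace X) (hδ : DeltaHyperbolic X δ)
    {a c x : X} {s : Set X} (hs : IsGeodesicSegment s c a) {E : ℝ}
    (hE : dist a x + dist x c ≤ dist a c + E) : infDist x s ≤ E / 2 + 4 * δ := by
  obtain ⟨s1, hs1⟩ := hX a x
  obtain ⟨s2, hs2⟩ := hX x c
  obtain ⟨q1, hq1, q2, hq2, q3, hq3, h12, h13⟩ := hδ.exists_close_points ⟨hs1, hs2, hs⟩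
  have e1 := hs1.dist_add_dist hq1
  have e2 := hs2.dist_add_dist hq2
  have hq1x : dist x q1 ≤ E / 2 + 2 * δ := by
    linarith [dist_triangle a q1 q2, dist_triangle a q2 c, dist_triangle x q2 q1,
      dist_comm q2 q1, dist_comm q1 x]
  calc infDist x s ≤ dist x q3 := infDist_le_dist_of_mem hq3
    _ ≤ dist x q1 + dist q1 q3 := dist_triangle _ _ _
    _ ≤ E / 2 + 4 * δ := by linarith

lemma infDist_le_of_dist_le_dist (hX : GeodesicSpace X) (hδ : DeltaHyperbolic X δ)
    {a b c x q q' : X} {s s' : Set X} (hab : IsGeodesicSegment s a b)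
    (hca : IsGeodesicSegment s' c a) (hx : x ∈ s) (hq : q ∈ s) (hq' : q' ∈ s')
    (hxq : dist a x ≤ dist a q) (hqq' : dist q q' ≤ 2 * δ) : infDist x s' ≤ 6 * δ := by
  have e1 := hab.dist_add_dist_of_mem_of_mem hx hq hxq
  have e2 := hca.dist_add_dist hq'
  have hE : dist a x + dist x c ≤ dist a c + 4 * δ := by
    linarith [dist_triangle4 x q q' c, dist_triangle a q' q, dist_comm c a, dist_comm c q',
      dist_comm q' a, dist_comm q' q]
  linarith [hδ.infDist_le_of_dist_add_dist_le hX hca hE]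

lemma slimTriangles (hX : GeodesicSpace X) (hδ : DeltaHyperbolic X δ) :
    SlimTriangles X (6 * δ) := by
  intro a b c s1 s2 s3 h x hx
  obtain ⟨q1, hq1, q2, hq2, q3, hq3, h12, h13⟩ := hδ.exists_close_points h
  rcases le_total (dist a x) (dist a q1) with hxq | hqx
  · exact min_le_of_right_le (hδ.infDist_le_of_dist_le_dist hX h.1 h.2.2 hx hq1 hq3 hxq h13)
  · have hxq : dist b x ≤ dist b q1 := by
      linarith [h.1.dist_add_dist hx, h.1.dist_add_dist hq1, dist_comm x b, dist_comm q1 b]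
    exact min_le_of_left_le
      (hδ.infDist_le_of_dist_le_dist hX h.1.symm h.2.1.symm hx hq1 hq2 hxq h12)

end DeltaHyperbolic

structure IsQuasiGeodesicChain {X : Type*} [MetricSpace X] (z : ℕ → X) (n : ℕ) (G l C : ℝ) :
    Prop where
  dist_succ_le : ∀ i < n, dist (z i) (z (i + 1)) ≤ G
  abs_sub_le : ∀ i ≤ n, ∀ j ≤ n, |(i : ℝ) - j| ≤ l * dist (z i) (z j) + C

namespace SlimTriangles

variable {X : Type*} [MetricSpace X] {K : ℝ}

lemma exists_dist_le_of_chain (hX : GeodesicSpace X) (hslim : SlimTriangles X K) (hK : 0 ≤ K)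
    {G : ℝ} (hG : 0 ≤ G) (n : ℕ) (y : ℕ → X) (hy : ∀ i < n, dist (y i) (y (i + 1)) ≤ G)
    {s : Set X} (hs : IsGeodesicSegment s (y 0) (y n)) {w : X} (hw : w ∈ s) :
    ∃ i ≤ n, dist w (y i) ≤ K * Nat.clog 2 n + G / 2 := by
  induction n using Nat.strong_induction_on generalizing y s w with
  | _ n IH =>
  rcases lt_or_ge n 2 with hn | hn
  · have hyn : dist (y 0) (y n) ≤ G := by
      interval_cases n
      · simpa using hG
      · exact hy 0 one_pos
    have hbound : dist (y 0) (y n) / 2 ≤ K * Nat.clog 2 n + G / 2 := by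
      have : 0 ≤ K * Nat.clog 2 n := by positivity
      linarith
    rcases min_le_iff.1 ((hs.min_dist_le_half hw).trans hbound) with h | h
    · exact ⟨0, n.zero_le, h⟩
    · exact ⟨n, le_rfl, h⟩
  set m := n / 2
  obtain ⟨hm, hm'⟩ := Nat.clog_two_half_add_one_le hn
  obtain ⟨s', hs'⟩ := hX (y 0) (y m)
  obtain ⟨s'', hs''⟩ := hX (y m) (y n)
  have hstep (k : ℕ) (hk : Nat.clog 2 k + 1 ≤ Nat.clog 2 n) {w' : X} {i : ℕ}
      (hww' : dist w w' ≤ K) (hi : dist w' (y i) ≤ K * Nat.clog 2 k + G / 2) :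
      dist w (y i) ≤ K * Nat.clog 2 n + G / 2 := by
    have : K * (Nat.clog 2 k + 1 : ℕ) ≤ K * Nat.clog 2 n := by gcongr
    push_cast at this
    linarith [dist_triangle w w' (y i)]
  rcases min_le_iff.1 (hslim _ _ _ _ _ _ ⟨hs.symm, hs', hs''⟩ w hw) with h | h
  · obtain ⟨w', hw', hww'⟩ := hs'.exists_dist_le_of_infDist_le h
    obtain ⟨i, hi, hdi⟩ := IH m (by omega) y (fun i hi => hy i (by omega)) hs' hw'
    exact ⟨i, by omega, hstep m hm hww' hdi⟩
  · obtain ⟨w', hw', hww'⟩ := hs''.exists_dist_le_of_infDist_le h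
    have hs''' : IsGeodesicSegment s'' (y (m + 0)) (y (m + (n - m))) := by
      rwa [Nat.add_zero, Nat.add_sub_cancel' (Nat.div_le_self n 2)]
    obtain ⟨i, hi, hdi⟩ := IH (n - m) (by omega) (fun k => y (m + k))
      (fun i hi => hy (m + i) (by omega)) hs''' hw'
    exact ⟨m + i, by omega, hstep (n - m) hm' hww' hdi⟩

lemma le_mul_clog_of_le_dist (hX : GeodesicSpace X) (hslim : SlimTriangles X K) (hK : 0 ≤ K)
    {n : ℕ} {z : ℕ → X} {R : ℝ} (hz : ∀ k < n, dist (z k) (z (k + 1)) ≤ R)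
    {s : Set X} {u v w : X} (hs : IsGeodesicSegment s u v) (hw : w ∈ s) {i j : ℕ} (hij : i ≤ j)
    (hj : j ≤ n) (hu : dist u (z i) ≤ R) (hv : dist (z j) v ≤ R) (hwu : R ≤ dist w u)
    (hwv : R ≤ dist w v) (hwz : ∀ k ≤ n, R ≤ dist w (z k)) :
    R ≤ 2 * K * Nat.clog 2 (j - i + 2) := by
  -- the detour `u, z i, …, z j, v`
  set c : ℕ → X := fun k => if k = 0 then u else if k ≤ j - i + 1 then z (i + k - 1) else v
  have hc : ∀ k < j - i + 2, dist (c k) (c (k + 1)) ≤ R := by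
    intro k hk
    rcases Nat.eq_zero_or_pos k with rfl | hk0
    · simpa [c] using hu
    rcases (show k ≤ j - i + 1 by omega).lt_or_eq with hk1 | rfl
    · have hck : c k = z (i + k - 1) := by simp [c, hk0.ne', hk1.le]
      have hck' : c (k + 1) = z (i + k - 1 + 1) := by
        simp only [c, if_neg (Nat.succ_ne_zero k), if_pos (show k + 1 ≤ j - i + 1 by omega)]
        congr 1
        omega
      rw [hck, hck']
      exact hz _ (by omega)
    · have hck : c (j - i + 1) = z j := by simp [c]; congr 1; omega
      have hck' : c (j - i + 1 + 1) = v := by simp [c]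
      rwa [hck, hck']
  have hcs : IsGeodesicSegment s (c 0) (c (j - i + 2)) := by simpa [c] using hs
  obtain ⟨k, hk, hwk⟩ :=
    hslim.exists_dist_le_of_chain hX hK (dist_nonneg.trans hu) _ c hc hcs hw
  have hfar : R ≤ dist w (c k) := by
    simp only [c]
    split_ifs
    · exact hwu
    · exact hwz _ (by omega)
    · exact hwv
  linarith

lemma exists_le_of_isMaxOn (hX : GeodesicSpace X) (hslim : SlimTriangles X K) (hK : 0 ≤ K)
    {n : ℕ} {z : ℕ → X} {G l C : ℝ} (hz : IsQuasiGeodesicChain z n G l C) (hl : 0 ≤ l)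
    {s : Set X} (hs : IsGeodesicSegment s (z 0) (z n)) {w₀ : X} (hw₀ : w₀ ∈ s)
    (hmax : IsMaxOn (fun w => infDist w (z '' Iic n)) s w₀)
    (hG : G ≤ infDist w₀ (z '' Iic n)) :
    ∃ m : ℕ, (m : ℝ) ≤ 4 * l * infDist w₀ (z '' Iic n) + C + 2 ∧
      infDist w₀ (z '' Iic n) ≤ 2 * K * Nat.clog 2 m := by
  set D := infDist w₀ (z '' Iic n)
  have hfar : ∀ k ≤ n, D ≤ dist w₀ (z k) := fun k hk => infDist_le_dist_of_mem ⟨k, hk, rfl⟩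
  have hnear : ∀ p ∈ s, ∃ k ≤ n, dist p (z k) ≤ D := by
    intro p hp
    obtain ⟨k, hk, hpk⟩ := exists_le_dist_eq_infDist_image_Iic z n p
    exact ⟨k, hk, hpk ▸ hmax hp⟩
  obtain ⟨s', hs's, u, v, hs', hw₀', huv, hu, hv⟩ :=
    hs.exists_subsegment hw₀ (infDist_nonneg (x := w₀) (s := z '' Iic n))
  have hwu : D ≤ dist w₀ u := by
    rcases hu with rfl | hu
    exacts [hfar 0 n.zero_le, hu.ge]
  have hwv : D ≤ dist w₀ v := by
    rcases hv with rfl | hv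
    exacts [hfar n le_rfl, hv.ge]
  obtain ⟨i, hi, hui⟩ := hnear u (hs's hs'.mem_left)
  obtain ⟨j, hj, hvj⟩ := hnear v (hs's hs'.mem_right)
  have hzij : l * dist (z i) (z j) ≤ l * (4 * D) := by
    gcongr
    linarith [dist_triangle4 (z i) u v (z j), dist_comm (z i) u]
  have hij := hz.abs_sub_le i hi j hj
  have hstep : ∀ k < n, dist (z k) (z (k + 1)) ≤ D := fun k hk => (hz.dist_succ_le k hk).trans hG
  rcases le_total i j with h | h
  · refine ⟨j - i + 2, ?_, hslim.le_mul_clog_of_le_dist hX hK hstep hs' hw₀' h hj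
      hui (by rwa [dist_comm]) hwu hwv hfar⟩
    rw [abs_sub_comm, abs_of_nonneg (by simpa using h)] at hij
    push_cast [h]
    linarith
  · refine ⟨i - j + 2, ?_, hslim.le_mul_clog_of_le_dist hX hK hstep hs'.symm hw₀' h hi
      hvj (by rwa [dist_comm]) hwv hwu hfar⟩
    rw [abs_of_nonneg (by simpa using h)] at hij
    push_cast [h]
    linarith

/-- The Morse lemma, for quasi-geodesic chains. -/
theorem exists_dist_le_of_quasiGeodesicChain (hX : GeodesicSpace X) (hslim : SlimTriangles X K)
    (hK : 0 ≤ K) (G l C : ℝ) (hl : 0 ≤ l) :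
    ∃ M, ∀ (n : ℕ) (z : ℕ → X), IsQuasiGeodesicChain z n G l C →
      ∀ s, IsGeodesicSegment s (z 0) (z n) → ∀ w ∈ s, ∃ k ≤ n, dist w (z k) ≤ M := by
  obtain ⟨N, hN⟩ := exists_le_of_le_mul_clog_add (a := 8 * l * K) (b := C + 2) (by positivity)
  refine ⟨max G (2 * K * Nat.clog 2 N), fun n z hz s hs w hw => ?_⟩
  obtain ⟨w₀, hw₀, hmax⟩ := hs.isCompact.exists_isMaxOn hs.nonempty
    (continuous_infDist_pt (z '' Iic n)).continuousOn
  have hD : infDist w₀ (z '' Iic n) ≤ max G (2 * K * Nat.clog 2 N) := by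
    rcases le_or_gt (infDist w₀ (z '' Iic n)) G with hG | hG
    · exact le_max_of_le_left hG
    obtain ⟨m, hm, hDm⟩ := hslim.exists_le_of_isMaxOn hX hK hz hl hs hw₀ hmax hG.le
    have hmN : m ≤ N := hN m (by nlinarith)
    exact le_max_of_le_right (hDm.trans (by gcongr))
  obtain ⟨k, hk, hwk⟩ := exists_le_dist_eq_infDist_image_Iic z n w
  exact ⟨k, hk, hwk ▸ (hmax hw).trans hD⟩

end SlimTriangles

lemma IsGeodesicSegment.exists_quasiGeodesicChain {X : Type*} [MetricSpace X] {s : Set X}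
    {x y : X} (h : IsGeodesicSegment s x y) :
    ∃ n, 0 < n ∧ ∃ z : ℕ → X, z 0 = x ∧ z n = y ∧ (∀ k, z k ∈ s) ∧
      IsQuasiGeodesicChain z n 1 1 2 := by
  obtain ⟨γ, h0, hT, rfl, hiso⟩ := h
  set L := dist x y
  set n := ⌈L⌉₊ + 1
  have hLn : L ≤ n := by
    push_cast [n]
    linarith [Nat.le_ceil L]
  have ht : ∀ k : ℕ, min (k : ℝ) L ∈ Icc 0 L := fun k => ⟨by positivity, min_le_right _ _⟩
  have hdist (i j : ℕ) :
      dist (γ (min (i : ℝ) L)) (γ (min (j : ℝ) L)) = |min (i : ℝ) L - min (j : ℝ) L| :=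
    hiso _ (ht i) _ (ht j)
  have hlag : ∀ k ≤ n, (k : ℝ) - 2 ≤ min (k : ℝ) L := by
    intro k hk
    have hkn : (k : ℝ) ≤ n := by exact_mod_cast hk
    have hceil : (⌈L⌉₊ : ℝ) < L + 1 := Nat.ceil_lt_add_one dist_nonneg
    push_cast [n] at hkn
    rcases min_choice (k : ℝ) L with h | h <;> rw [h] <;> linarith
  refine ⟨n, by positivity, fun k => γ (min (k : ℝ) L),
    by dsimp only; rw [Nat.cast_zero, min_eq_left dist_nonneg, h0], ?_, fun k => ⟨_, ht k, rfl⟩,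
    ⟨fun i _ => ?_, fun i hi j hj => ?_⟩⟩
  · simpa [min_eq_right hLn] using hT
  · rw [hdist]
    refine (abs_min_sub_min_le_max _ _ _ _).trans ?_
    simp
  · rw [hdist, one_mul]
    have hi' := hlag i hi
    have hj' := hlag j hj
    have hi'' := min_le_left (i : ℝ) L
    have hj'' := min_le_left (j : ℝ) L
    rw [abs_sub_le_iff]
    constructor <;> linarith [le_abs_self (min (i : ℝ) L - min (j : ℝ) L),
      neg_abs_le (min (i : ℝ) L - min (j : ℝ) L)]

lemma exists_lift_of_dist_le {X Y : Type*} [MetricSpace Y] {f : X → Y} {D : ℝ}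
    (hdense : ∀ y : Y, ∃ x : X, dist y (f x) ≤ D) {n : ℕ} (hn : 0 < n)
    {y : ℕ → Y} {x₀ x₁ : X} (h₀ : dist (f x₀) (y 0) ≤ D) (h₁ : dist (f x₁) (y n) ≤ D) :
    ∃ z : ℕ → X, z 0 = x₀ ∧ z n = x₁ ∧ ∀ k, dist (f (z k)) (y k) ≤ D := by
  choose g hg using hdense
  refine ⟨fun k => if k = 0 then x₀ else if k = n then x₁ else g (y k), by simp, by simp [hn.ne'],
    fun k => ?_⟩
  dsimp only
  split_ifs with hk hkn
  · rwa [hk]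
  · rwa [hkn]
  · rw [dist_comm]
    exact hg _

section QuasiIsometry

variable {X Y : Type*} [MetricSpace X] [MetricSpace Y] {f : X → Y} {l C D : ℝ}

lemma QIEmbedding.dist_le_of_dist_le (hf : QIEmbedding f l C) (hl : 0 < l) {x x' : X} {r : ℝ}
    (h : dist (f x) (f x') ≤ r) : dist x x' ≤ l * (r + C) := by
  have := (hf x x').1
  rw [one_div_mul_eq_div] at this
  exact (div_le_iff₀' hl).1 (by linarith)

lemma IsQuasiGeodesicChain.of_dist_image_le {n : ℕ} {y : ℕ → Y} {G l' C' : ℝ}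
    (hy : IsQuasiGeodesicChain y n G l' C') (hl' : 0 ≤ l') (hf : QIEmbedding f l C) (hl : 0 < l)
    {z : ℕ → X} (hz : ∀ k ≤ n, dist (f (z k)) (y k) ≤ D) :
    IsQuasiGeodesicChain z n (l * (G + 2 * D + C)) (l' * l) (l' * (C + 2 * D) + C') := by
  have hdist : ∀ i ≤ n, ∀ j ≤ n, dist (y i) (y j) ≤ dist (f (z i)) (f (z j)) + 2 * D ∧
      dist (f (z i)) (f (z j)) ≤ dist (y i) (y j) + 2 * D := by
    intro i hi j hj
    have hzi := hz i hi
    have hzj := hz j hj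
    constructor
    · linarith [dist_triangle4 (y i) (f (z i)) (f (z j)) (y j), dist_comm (y i) (f (z i))]
    · linarith [dist_triangle4 (f (z i)) (y i) (y j) (f (z j)), dist_comm (y j) (f (z j))]
  constructor
  · intro i hi
    apply hf.dist_le_of_dist_le hl
    linarith [(hdist i hi.le (i + 1) hi).2, hy.dist_succ_le i hi]
  · intro i hi j hj
    have h1 := hy.abs_sub_le i hi j hj
    have h2 : l' * dist (y i) (y j) ≤ l' * (l * dist (z i) (z j) + C + 2 * D) := by
      gcongr
      linarith [(hdist i hi j hj).1, (hf (z i) (z j)).2]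
    linarith

lemma SlimTriangles.exists_infDist_image_le {K : ℝ} (hX : GeodesicSpace X)
    (hslim : SlimTriangles X K) (hK : 0 ≤ K) (hf : QIEmbedding f l C) (hl : 0 < l)
    (hdense : ∀ y : Y, ∃ x : X, dist y (f x) ≤ D) :
    ∃ M, ∀ (a b : Y) (σ : Set Y) (a' b' : X) (s : Set X), IsGeodesicSegment σ a b →
      dist (f a') a ≤ D → dist (f b') b ≤ D → IsGeodesicSegment s a' b' →
      ∀ w ∈ s, infDist (f w) σ ≤ M := by
  obtain ⟨M, hM⟩ := hslim.exists_dist_le_of_quasiGeodesicChain hX hK (l * (1 + 2 * D + C))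
    (1 * l) (1 * (C + 2 * D) + 2) (by positivity)
  refine ⟨l * M + C + D, fun a b σ a' b' s hσ ha hb hs w hw => ?_⟩
  obtain ⟨n, hn, y, hy0, hyn, hyσ, hy⟩ := hσ.exists_quasiGeodesicChain
  obtain ⟨z, hz0, hzn, hzy⟩ := exists_lift_of_dist_le hdense hn (hy0 ▸ ha) (hyn ▸ hb)
  have hz := hy.of_dist_image_le zero_le_one hf hl fun k _ => hzy k
  obtain ⟨k, -, hwk⟩ := hM n z hz s (hz0 ▸ hzn ▸ hs) w hw
  calc infDist (f w) σ ≤ dist (f w) (y k) := infDist_le_dist_of_mem (hyσ k)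
    _ ≤ dist (f w) (f (z k)) + dist (f (z k)) (y k) := dist_triangle _ _ _
    _ ≤ l * M + C + D := by
      linarith [(hf w (z k)).2, mul_le_mul_of_nonneg_left hwk hl.le, hzy k]

theorem GromovHyperbolic.of_qiEmbedding (hX : GeodesicSpace X) (hhyp : GromovHyperbolic X)
    (hf : QIEmbedding f l C) (hl : 0 < l) (hdense : ∀ y : Y, ∃ x : X, dist y (f x) ≤ D) :
    GromovHyperbolic Y := by
  obtain ⟨δ, hδ0, hδ⟩ := hhyp
  obtain ⟨M, hM⟩ :=
    (hδ.slimTriangles hX).exists_infDist_image_le hX (by positivity) hf hl hdense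
  refine ⟨max (l * δ + C + M) 0, le_max_right _ _, fun a b c σ₁ σ₂ σ₃ hσ => ?_⟩
  choose g hg using hdense
  obtain ⟨s₁, hs₁⟩ := hX (g a) (g b)
  obtain ⟨s₂, hs₂⟩ := hX (g b) (g c)
  obtain ⟨s₃, hs₃⟩ := hX (g c) (g a)
  obtain ⟨p, hp₁, hp₂, hp₃⟩ := hδ _ _ _ _ _ _ ⟨hs₁, hs₂, hs₃⟩
  have hside {a' b' : X} {s : Set X} {a'' b'' : Y} {σ : Set Y} (hs : IsGeodesicSegment s a' b')
      (hσ : IsGeodesicSegment σ a'' b'') (ha : dist (f a') a'' ≤ D) (hb : dist (f b') b'' ≤ D)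
      (hp : infDist p s ≤ δ) : infDist (f p) σ ≤ max (l * δ + C + M) 0 := by
    obtain ⟨w, hw, hpw⟩ := hs.exists_dist_le_of_infDist_le hp
    refine le_max_of_le_left ((infDist_le_infDist_add_dist (y := f w)).trans ?_)
    linarith [hM a'' b'' σ a' b' s hσ ha hb hs w hw, (hf p w).2,
      mul_le_mul_of_nonneg_left hpw hl.le]
  have hg' (y : Y) : dist (f (g y)) y ≤ D := dist_comm y _ ▸ hg y
  exact ⟨f p, hside hs₁ hσ.1 (hg' a) (hg' b) hp₁, hside hs₂ hσ.2.1 (hg' b) (hg' c) hp₂,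
    hside hs₃ hσ.2.2 (hg' c) (hg' a) hp₃⟩

lemma QIEmbedding.exists_quasiInverse (hf : QIEmbedding f l C) (hl : 1 ≤ l) (hC : 0 ≤ C)
    (hD : 0 ≤ D) (hdense : ∀ y : Y, ∃ x : X, dist y (f x) ≤ D) :
    ∃ g : Y → X, QIEmbedding g l (l * (C + 2 * D)) ∧ ∀ x, ∃ y, dist x (g y) ≤ l * (D + C) := by
  have hl0 : 0 < l := by linarith
  choose g hg using hdense
  refine ⟨g, fun y y' => ⟨?_, ?_⟩, fun x => ⟨f x, ?_⟩⟩
  · have hyy' : dist y y' ≤ l * dist (g y) (g y') + (C + 2 * D) := by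
      linarith [dist_triangle4 y (f (g y)) (f (g y')) y', hg y, hg y', dist_comm y' (f (g y')),
        (hf (g y) (g y')).2]
    have hdiv : (C + 2 * D) / l ≤ l * (C + 2 * D) :=
      (div_le_self (by positivity) hl).trans (le_mul_of_one_le_left (by positivity) hl)
    have : 1 / l * dist y y' ≤ dist (g y) (g y') + (C + 2 * D) / l := by
      calc 1 / l * dist y y' ≤ 1 / l * (l * dist (g y) (g y') + (C + 2 * D)) := by gcongr
        _ = dist (g y) (g y') + (C + 2 * D) / l := by field_simp
    linarith
  · have := hf.dist_le_of_dist_le hl0 (r := dist y y' + 2 * D) (by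
      linarith [dist_triangle4 (f (g y)) y y' (f (g y')), hg y, hg y', dist_comm y (f (g y))])
    linarith
  · rw [dist_comm]
    exact hf.dist_le_of_dist_le hl0 (dist_comm (f x) _ ▸ hg (f x))

end QuasiIsometry

/-- If `f : X → Y` is a quasi-isometry between geodesic metric spaces,
then `X` is Gromov hyperbolic if and only if `Y` is Gromov hyperbolic. -/
theorem quasiIsometry_preserves_hyperbolicity
    {X Y : Type*} [MetricSpace X] [MetricSpace Y]
    (hX : GeodesicSpace X) (hY : GeodesicSpace Y)
    (f : X → Y) (l C D : ℝ) (hl : 1 ≤ l) (hC : 0 ≤ C) (hD : 0 ≤ D)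
    (hqi : QIEmbedding f l C)
    (hdense : ∀ y : Y, ∃ x : X, dist y (f x) ≤ D) :
    GromovHyperbolic X ↔ GromovHyperbolic Y := by
  obtain ⟨g, hg, hgdense⟩ := hqi.exists_quasiInverse hl hC hD hdense
  exact ⟨fun h => h.of_qiEmbedding hX hqi (by linarith) hdense,
    fun h => h.of_qiEmbedding hY hg (by linarith) hgdense⟩
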